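/- Let H be a graph with at least one edge and let G be a subgraph of H with at least one edge and with matching number ν. Then cms(H) ≤ |E(H)| / ( ⌊(|E(G)| − cms(G))/ν⌋ + 1 ). -/

import Mathlib

open SimpleGraph

/-- Two edges are adjacent if they are distinct and share a vertex. -/
def EdgesAdj {V : Type*} (e e' : Sym2 V) : Prop :=
  e ≠ e' ∧ ∃ v : V, v ∈ e ∧ v ∈ e'

/-- `ms` of an ordering of a graph, the ordering being given as the list of edges
in increasing label order: the largest `s ∈ {1,…,m}` such that any ordered pair of
adjacent edges `(e,e')` with `ℓ(e) < ℓ(e')` has forward distance at least `s`. -/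
noncomputable def msList {V : Type*} (L : List (Sym2 V)) : ℕ :=
  sSup {s | 1 ≤ s ∧ s ≤ L.length ∧ ∀ i j e e', i < j →
    L[i]? = some e → L[j]? = some e' → EdgesAdj e e' → s ≤ j - i}

/-- `cms` of an ordering of a graph: the largest `s ∈ {1,…,m}` such that every pair of
adjacent edges is at cyclic distance at least `s`. -/
noncomputable def cmsList {V : Type*} (L : List (Sym2 V)) : ℕ :=
  sSup {s | 1 ≤ s ∧ s ≤ L.length ∧ ∀ i j e e', i < j →
    L[i]? = some e → L[j]? = some e' → EdgesAdj e e' →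
    s ≤ min (j - i) (L.length - (j - i))}

/-- `L` is an ordering of `G`: it lists every edge of `G` exactly once. -/
def IsOrdering {V : Type*} (G : SimpleGraph V) (L : List (Sym2 V)) : Prop :=
  L.Nodup ∧ ∀ e, e ∈ L ↔ e ∈ G.edgeSet

/-- Cyclic matching sequenceability of a graph: the maximum of `cmsList` over orderings. -/
noncomputable def cms {V : Type*} (G : SimpleGraph V) : ℕ :=
  sSup {k | ∃ L, IsOrdering G L ∧ cmsList L = k}

/-- Number of edges of a graph. -/
noncomputable def numEdges {V : Type*} (G : SimpleGraph V) : ℕ :=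
  Nat.card G.edgeSet

/-- The chromatic index: the least number of colours in a proper edge colouring. -/
noncomputable def chromaticIndex {V : Type*} (G : SimpleGraph V) : ℕ :=
  sInf {c | ∃ f : G.edgeSet → Fin c, ∀ e e' : G.edgeSet, EdgesAdj e.1 e'.1 → f e ≠ f e'}

/-- The edge set of `G` forms a matching (no two distinct edges share a vertex). -/
def IsMatchingGraph {V : Type*} (G : SimpleGraph V) : Prop :=
  ∀ e ∈ G.edgeSet, ∀ e' ∈ G.edgeSet, ¬ EdgesAdj e e'

/-- `G` is regular of degree `d`. -/
def IsRegularGraph {V : Type*} (G : SimpleGraph V) (d : ℕ) : Prop :=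
  ∀ v : V, Nat.card (G.neighborSet v) = d

/-- A finite set of edges of `G` forming a matching. -/
def IsMatchingSet {V : Type*} (G : SimpleGraph V) (M : Finset (Sym2 V)) : Prop :=
  ↑M ⊆ G.edgeSet ∧ ∀ e ∈ M, ∀ e' ∈ M, ¬ EdgesAdj e e'

/-- The matching number of a graph. -/
noncomputable def matchingNumber {V : Type*} (G : SimpleGraph V) : ℕ :=
  sSup {k | ∃ M : Finset (Sym2 V), IsMatchingSet G M ∧ M.card = k}

/-!
Fix an ordering `L` of `H` realising `s = cms H`, and let `q = ⌊|E(H)| / s⌋`. Any `s` cyclically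
consecutive edges of `L` are pairwise non-adjacent, so at most `ν` of them lie in `G`; covering by
`q` such blocks, every cyclic window of length at most `q s` contains at most `q ν` edges of `G`.
Two adjacent edges of `G` are at cyclic distance at least `s` in `L`, so both arcs of `L` between
them are such windows. In the ordering of `G` induced by `L` they are therefore at cyclic distance
at least `|E(G)| + 1 - q ν`, whence `|E(G)| - cms G < q ν`, i.e. `⌊(|E(G)| - cms G) / ν⌋ < q`.
-/

section Lists

variable {α : Type*} (p : α → Bool)

theorem List.countP_take_mul_le_of_forall_rotate {L : List α} {s t : ℕ}
    (hwin : ∀ a, ((L.rotate a).take s).countP p ≤ t) (n a : ℕ) :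
    ((L.rotate a).take (n * s)).countP p ≤ n * t := by
  induction n generalizing a with
  | zero => simp
  | succ n ih =>
    have hdrop :
        ((L.rotate a).drop s).take (n * s) <+: ((L.rotate a).rotate s).take (n * s) := by
      rcases le_or_gt s (L.rotate a).length with hs | hs
      · rw [rotate_eq_drop_append_take hs]
        exact (prefix_append _ _).take _
      · simp [drop_eq_nil_of_le hs.le]
    rw [Nat.succ_mul, Nat.succ_mul, add_comm (n * s), add_comm (n * t), take_add, countP_append]
    rw [rotate_rotate] at hdrop
    exact Nat.add_le_add (hwin a) (hdrop.countP_le.trans (ih _))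

theorem List.countP_take_rotate_add_countP_take {L : List α} {a b : ℕ} (hab : a ≤ b)
    (hb : b ≤ L.length) :
    ((L.rotate a).take (b - a)).countP p + (L.take a).countP p = (L.take b).countP p := by
  rw [rotate_eq_drop_append_take (hab.trans hb), take_append_of_le_length (by simp; omega),
    add_comm, ← countP_append, ← take_add, Nat.add_sub_cancel' hab]

theorem List.countP_take_rotate_add_countP_take_of_ge {L : List α} {a b : ℕ} (hba : b ≤ a)
    (ha : a ≤ L.length) :
    ((L.rotate a).take (L.length - a + b)).countP p + (L.take a).countP p =
      L.countP p + (L.take b).countP p := by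
  rw [rotate_eq_drop_append_take ha, take_append, take_of_length_le (by simp),
    length_drop, Nat.add_sub_cancel_left, take_take, Nat.min_eq_left hba, countP_append,
    add_right_comm, ← countP_append, ← rotate_eq_drop_append_take ha, (rotate_perm L a).countP_eq]

theorem List.countP_take_add_one_of_getElem {L : List α} {n : ℕ} (hn : n < L.length)
    (hp : p L[n]) : (L.take (n + 1)).countP p = (L.take n).countP p + 1 := by
  rw [take_add_one, getElem?_eq_getElem hn, countP_append]
  simp [hp]

theorem List.exists_getElem_eq_getElem_filter (L : List α) {i : ℕ}
    (hi : i < (L.filter p).length) :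
    ∃ n, ∃ hn : n < L.length, L[n] = (L.filter p)[i] ∧ (L.take n).countP p = i := by
  induction L generalizing i with
  | nil => simp at hi
  | cons a t ih =>
    by_cases hpa : p a
    · rcases i with _ | i
      · exact ⟨0, by simp, by simp [hpa], by simp⟩
      · simp only [filter_cons_of_pos hpa, length_cons, Nat.add_lt_add_iff_right] at hi
        obtain ⟨n, hn, hget, hcount⟩ := ih hi
        exact ⟨n + 1, by simpa using hn, by simpa [hpa] using hget, by simp [hpa, hcount]⟩
    · simp only [filter_cons_of_neg hpa] at hi
      obtain ⟨n, hn, hget, hcount⟩ := ih hi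
      exact ⟨n + 1, by simpa using hn, by simpa [hpa] using hget, by simp [hpa, hcount]⟩

end Lists

theorem Nat.add_mod_eq_or_add_mod_add_eq_of_lt {k b m : ℕ} (hk : k < m) (hb : b < m) :
    (k + b) % m = k + b ∨ (k + b) % m + m = k + b := by
  by_cases hkb : k + b < m
  · exact Or.inl (Nat.mod_eq_of_lt hkb)
  · rw [Nat.mod_eq_sub_mod (by omega), Nat.mod_eq_of_lt (by omega)]
    omega

section Graphs

variable {V : Type*}

theorem EdgesAdj.symm {e e' : Sym2 V} (h : EdgesAdj e e') : EdgesAdj e' e :=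
  ⟨h.1.symm, h.2.imp fun _ hv => hv.symm⟩

/-- The condition in the definition of `cmsList`: `cmsList L` is the largest `s ≤ L.length`
with `CyclicallySeparated s L`. -/
def CyclicallySeparated (s : ℕ) (L : List (Sym2 V)) : Prop :=
  ∀ i j e e', i < j → L[i]? = some e → L[j]? = some e' → EdgesAdj e e' →
    s ≤ min (j - i) (L.length - (j - i))

theorem cyclicallySeparated_one (L : List (Sym2 V)) : CyclicallySeparated 1 L := by
  intro i j e e' hij _ hj _
  have := (List.getElem?_eq_some_iff.mp hj).1
  omega

theorem cmsList_le_length (L : List (Sym2 V)) : cmsList L ≤ L.length :=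
  csSup_le' fun _ hk => hk.2.1

theorem le_cmsList {s : ℕ} {L : List (Sym2 V)} (hs : 1 ≤ s) (hsL : s ≤ L.length)
    (h : CyclicallySeparated s L) : s ≤ cmsList L :=
  le_csSup ⟨L.length, fun _ hk => hk.2.1⟩ ⟨hs, hsL, h⟩

theorem cmsList_spec {L : List (Sym2 V)} (hL : L ≠ []) :
    1 ≤ cmsList L ∧ cmsList L ≤ L.length ∧ CyclicallySeparated (cmsList L) L :=
  Nat.sSup_mem (s := {s | 1 ≤ s ∧ s ≤ L.length ∧ CyclicallySeparated s L})
    ⟨1, le_rfl, List.length_pos_iff.mpr hL, cyclicallySeparated_one L⟩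
    ⟨L.length, fun _ hk => hk.2.1⟩

theorem CyclicallySeparated.pairwise_take_rotate {s : ℕ} {L : List (Sym2 V)}
    (h : CyclicallySeparated s L) (a : ℕ) :
    ((L.rotate a).take s).Pairwise fun e e' => ¬ EdgesAdj e e' := by
  rw [← L.rotate_mod a, List.pairwise_iff_getElem]
  intro u v hu hv huv hadj
  simp only [List.length_take, List.length_rotate] at hu hv
  simp only [List.getElem_take, List.getElem_rotate] at hadj
  have ha : a % L.length < L.length := Nat.mod_lt _ (by omega)
  have hu' := Nat.add_mod_eq_or_add_mod_add_eq_of_lt (k := u) (by omega) ha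
  have hv' := Nat.add_mod_eq_or_add_mod_add_eq_of_lt (k := v) (by omega) ha
  rcases lt_or_gt_of_ne (a := (u + a % L.length) % L.length)
    (b := (v + a % L.length) % L.length) (by omega) with hlt | hlt
  · have := h _ _ _ _ hlt (List.getElem?_eq_getElem _) (List.getElem?_eq_getElem _) hadj
    omega
  · have := h _ _ _ _ hlt (List.getElem?_eq_getElem _) (List.getElem?_eq_getElem _) hadj.symm
    omega

theorem CyclicallySeparated.filter {s t : ℕ} {L : List (Sym2 V)} (p : Sym2 V → Bool)
    (h : CyclicallySeparated s L)
    (hwin : ∀ a, ((L.rotate a).take (L.length + 1 - s)).countP p ≤ t) :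
    CyclicallySeparated ((L.filter p).length + 1 - t) (L.filter p) := by
  intro i j e e' hij hi hj hadj
  -- `e = L[n₁]` and `e' = L[n₂]`; the two arcs of `L` from `n₁` to `n₂` and from `n₂` around to
  -- `n₁` are windows of length at most `L.length + 1 - s` holding `j - i + 1`, respectively
  -- `(L.filter p).length - (j - i) + 1`, elements satisfying `p`.
  have hjF : j < (L.filter p).length := (List.getElem?_eq_some_iff.mp hj).1
  obtain ⟨n₁, hn₁, hget₁, hcount₁⟩ := L.exists_getElem_eq_getElem_filter p (hij.trans hjF)
  obtain ⟨n₂, hn₂, hget₂, hcount₂⟩ := L.exists_getElem_eq_getElem_filter p hjF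
  rw [List.getElem?_eq_getElem (hij.trans hjF), ← hget₁, Option.some_inj] at hi
  rw [List.getElem?_eq_getElem hjF, ← hget₂, Option.some_inj] at hj
  subst hi hj
  have hcount₁' := L.countP_take_add_one_of_getElem p hn₁ (hget₁ ▸ List.getElem_filter _)
  have hcount₂' := L.countP_take_add_one_of_getElem p hn₂ (hget₂ ▸ List.getElem_filter _)
  have hn : n₁ < n₂ := by
    by_contra! hle
    have := (List.take_prefix_take_left (l := L) hle).countP_le (p := p)
    omega
  have hsep := h n₁ n₂ _ _ hn (List.getElem?_eq_getElem _) (List.getElem?_eq_getElem _) hadj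
  have hwin' : ∀ a k, k ≤ L.length + 1 - s → ((L.rotate a).take k).countP p ≤ t :=
    fun a k hk => ((List.take_prefix_take_left hk).countP_le).trans (hwin a)
  have hforward := L.countP_take_rotate_add_countP_take p (a := n₁) (b := n₂ + 1)
    (by omega) (by omega)
  have hbackward := L.countP_take_rotate_add_countP_take_of_ge p (a := n₂) (b := n₁ + 1)
    (by omega) (by omega)
  have := hwin' n₁ (n₂ + 1 - n₁) (by omega)
  have := hwin' n₂ (L.length - n₂ + (n₁ + 1)) (by omega)
  have hcount : L.countP p = (L.filter p).length := List.countP_eq_length_filter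
  omega

theorem IsOrdering.filter {G H : SimpleGraph V} {L : List (Sym2 V)} (h : IsOrdering H L)
    (hGH : G ≤ H) [DecidablePred (· ∈ G.edgeSet)] :
    IsOrdering G (L.filter (· ∈ G.edgeSet)) := by
  refine ⟨h.1.filter _, fun e => ?_⟩
  simp only [List.mem_filter, h.2 e, decide_eq_true_eq, and_iff_right_iff_imp]
  exact fun he => edgeSet_mono hGH he

theorem IsOrdering.ne_nil {G : SimpleGraph V} {L : List (Sym2 V)} (h : IsOrdering G L)
    (hG : G.edgeSet.Nonempty) : L ≠ [] := by
  rintro rfl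
  obtain ⟨e, he⟩ := hG
  simpa using (h.2 e).2 he

variable [Finite V]

theorem IsOrdering.length_eq {G : SimpleGraph V} {L : List (Sym2 V)} (h : IsOrdering G L) :
    L.length = numEdges G := by
  classical
  have hfin : G.edgeSet.Finite := Set.toFinite _
  have hL : L.toFinset = hfin.toFinset := by
    ext e
    rw [List.mem_toFinset, Set.Finite.mem_toFinset, h.2 e]
  rw [numEdges, Nat.card_coe_set_eq, Set.ncard_eq_toFinset_card _ hfin, ← hL,
    List.toFinset_card_of_nodup h.1]

theorem exists_isOrdering (G : SimpleGraph V) : ∃ L, IsOrdering G L := by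
  classical
  refine ⟨(Set.toFinite G.edgeSet).toFinset.toList, Finset.nodup_toList _, fun e => ?_⟩
  rw [Finset.mem_toList, Set.Finite.mem_toFinset]

theorem bddAbove_cmsList_orderings (G : SimpleGraph V) :
    BddAbove {k | ∃ L, IsOrdering G L ∧ cmsList L = k} := by
  refine ⟨numEdges G, ?_⟩
  rintro k ⟨L, hL, rfl⟩
  exact (cmsList_le_length L).trans_eq hL.length_eq

theorem IsOrdering.cmsList_le_cms {G : SimpleGraph V} {L : List (Sym2 V)}
    (h : IsOrdering G L) : cmsList L ≤ cms G :=
  le_csSup (bddAbove_cmsList_orderings G) ⟨L, h, rfl⟩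

theorem exists_isOrdering_cmsList_eq_cms (G : SimpleGraph V) :
    ∃ L, IsOrdering G L ∧ cmsList L = cms G :=
  Nat.sSup_mem (s := {k | ∃ L, IsOrdering G L ∧ cmsList L = k})
    ((exists_isOrdering G).elim fun L hL => ⟨cmsList L, L, hL, rfl⟩)
    (bddAbove_cmsList_orderings G)

theorem card_le_matchingNumber {G : SimpleGraph V} {M : Finset (Sym2 V)}
    (hM : IsMatchingSet G M) : M.card ≤ matchingNumber G := by
  classical
  refine le_csSup ⟨(Set.toFinite G.edgeSet).toFinset.card, ?_⟩ ⟨M, hM, rfl⟩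
  rintro k ⟨M', hM', rfl⟩
  exact Finset.card_le_card fun e he => (Set.Finite.mem_toFinset _).2 (hM'.1 he)

theorem matchingNumber_pos {G : SimpleGraph V} (hG : G.edgeSet.Nonempty) :
    0 < matchingNumber G := by
  obtain ⟨e, he⟩ := hG
  refine card_le_matchingNumber (M := {e}) ⟨by simpa using he, ?_⟩
  simp only [Finset.mem_singleton]
  rintro _ rfl _ rfl hadj
  exact hadj.1 rfl

theorem countP_le_matchingNumber {G : SimpleGraph V} {p : Sym2 V → Bool}
    (hp : ∀ e, p e → e ∈ G.edgeSet) {W : List (Sym2 V)} (hW : W.Nodup)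
    (hWadj : W.Pairwise fun e e' => ¬ EdgesAdj e e') :
    W.countP p ≤ matchingNumber G := by
  classical
  have : Std.Symm fun e e' : Sym2 V => ¬ EdgesAdj e e' := ⟨fun _ _ h h' => h h'.symm⟩
  have hM : IsMatchingSet G (W.filter p).toFinset := by
    refine ⟨fun e he => hp e (List.mem_filter.1 (List.mem_toFinset.1 he)).2, ?_⟩
    intro e he e' he' hadj
    rw [List.mem_toFinset] at he he'
    exact hWadj.forall (List.mem_of_mem_filter he) (List.mem_of_mem_filter he') hadj.1 hadj
  calc W.countP p = (W.filter p).toFinset.card := by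
        rw [List.toFinset_card_of_nodup (hW.filter p), List.countP_eq_length_filter]
    _ ≤ matchingNumber G := card_le_matchingNumber hM

theorem numEdges_sub_cms_lt_div_cms_mul_matchingNumber {G H : SimpleGraph V} (hGH : G ≤ H)
    (hG : G.edgeSet.Nonempty) :
    numEdges G - cms G < numEdges H / cms H * matchingNumber G := by
  classical
  obtain ⟨L, hL, hLcms⟩ := exists_isOrdering_cmsList_eq_cms H
  obtain ⟨hs, hsm, hsep⟩ := cmsList_spec (hL.ne_nil (hG.mono (edgeSet_mono hGH)))
  rw [← hLcms, ← hL.length_eq]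
  set s := cmsList L
  set q := L.length / s
  have hF := hL.filter hGH
  have hwin : ∀ a, ((L.rotate a).take s).countP (· ∈ G.edgeSet) ≤ matchingNumber G := fun a =>
    countP_le_matchingNumber (fun e he => of_decide_eq_true he)
      ((List.nodup_rotate.2 hL.1).sublist (List.take_sublist _ _)) (hsep.pairwise_take_rotate a)
  have hlen : L.length + 1 - s ≤ q * s := by
    have : L.length < q * s + s := Nat.lt_div_mul_add (by omega)
    omega
  have hsepF := hsep.filter _ fun a => ((List.take_prefix_take_left hlen).countP_le).trans
    (List.countP_take_mul_le_of_forall_rotate _ hwin q a)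
  rw [hF.length_eq] at hsepF
  have hq : 0 < q * matchingNumber G :=
    Nat.mul_pos (Nat.div_pos hsm (by omega)) (matchingNumber_pos hG)
  by_cases hsmall : numEdges G < q * matchingNumber G
  · omega
  · have := le_cmsList (by omega) (by rw [hF.length_eq]; omega) hsepF
    have := hF.cmsList_le_cms
    omega

end Graphs

theorem cms_le_div_floor_general {V : Type*} [Fintype V] (H G : SimpleGraph V)
    (hsub : G ≤ H) (hG : G.edgeSet.Nonempty) :
    (cms H : ℝ) ≤ (numEdges H : ℝ) /
      (((numEdges G - cms G) / matchingNumber G + 1 : ℕ) : ℝ) := by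
  have hdiv : (numEdges G - cms G) / matchingNumber G < numEdges H / cms H := by
    apply Nat.div_lt_of_lt_mul
    rw [mul_comm]
    exact numEdges_sub_cms_lt_div_cms_mul_matchingNumber hsub hG
  rw [le_div_iff₀ (by positivity)]
  exact_mod_cast (Nat.mul_le_mul_left (cms H) hdiv).trans (Nat.mul_div_le _ _)

/-- Lemma: for a graph `H` and a subgraph `G` of `H` with matching number `ν`,
`cms(H) ≤ |E(H)| / (⌊(|E(G)| - cms(G))/ν⌋ + 1)`. -/
theorem cms_le_div_floor {V : Type*} [Fintype V] (H G : SimpleGraph V)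
    (hsub : G ≤ H) (hH : H.edgeSet.Nonempty) (hG : G.edgeSet.Nonempty) :
    (cms H : ℝ) ≤ (numEdges H : ℝ) /
      (((numEdges G - cms G) / matchingNumber G + 1 : ℕ) : ℝ) :=
  cms_le_div_floor_general H G hsub hG
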